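/- Type Safety for elaborated programs: if e is a closed λ_op-quote expression well-typed in c-mode with both effect sets empty, i.e. ⊢_c e : T⁰ ! ∅;∅, then starting from the initial configuration ⟨⟦e⟧_c; [-]; ∅; ∅; ⊤⟩ either (1) evaluation diverges, (2) evaluation reaches ⟨err; E; U; M; I⟩ for some E, U, M, I, or (3) evaluation reaches ⟨return n; [-]; U; M; I⟩ for some normal form n and some U, M, I. -/
import Mathlib


/- A formalisation of the two-level calculus λ_op-quote (effect handlers,
quotation and splice) and its core language λ_AST(op) (effect handlers, AST
constructors, and dynamic scope-extrusion checking primitives), together with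
the mode-indexed elaborations (naïve, lazy, eager, and C4C). -/

namespace MetaLang

abbrev OpName := String
abbrev Eff := Set OpName

/-- Run-time pre-types `R` of λ_AST(op). -/
inductive PreTy : Type
  | nat  : PreTy
  | fn   : PreTy → Eff → PreTy → PreTy
  | cont : PreTy → Eff → PreTy → PreTy

/-- Level 0 (run-time) value types of λ_op-quote. -/
inductive Ty0 : Type
  | nat  : Ty0
  | fn   : Ty0 → Eff → Ty0 → Ty0
  | cont : Ty0 → Eff → Ty0 → Ty0

/-- Level −1 (compile-time) value types of λ_op-quote. -/
inductive Ty1 : Type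
  | nat  : Ty1
  | fn   : Ty1 → Eff → Ty1 → Ty1
  | cont : Ty1 → Eff → Ty1 → Ty1
  | code : Ty0 → Eff → Ty1          -- Code(T⁰ ! ξ)⁻¹

/-- Erasure of level annotations, turning level 0 types into run-time pre-types. -/
def eraseTy : Ty0 → PreTy
  | .nat => .nat
  | .fn S ξ T => .fn (eraseTy S) ξ (eraseTy T)
  | .cont S ξ T => .cont (eraseTy S) ξ (eraseTy T)

/-- An effect signature: `arg0/res0` type the (run-time) operations occurring
inside quoted code, `arg1/res1` the (compile-time) operations. -/
structure Sig where
  arg0 : OpName → Ty0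
  res0 : OpName → Ty0
  arg1 : OpName → Ty1
  res1 : OpName → Ty1

/-! ### Source syntax (de Bruijn, binders annotated with level 0 types) -/

mutual
  inductive SVal : Type
    | var : ℕ → SVal
    | nat : ℕ → SVal
    | lam : Ty0 → SExpr → SVal
  inductive SExpr : Type
    | app    : SVal → SVal → SExpr
    | ret    : SVal → SExpr
    | seq    : Ty0 → SExpr → SExpr → SExpr     -- do x : T ← e₁ in e₂
    | op     : OpName → SVal → SExpr
    | handle : SExpr → SHandler → SExpr
    | resume : SVal → SVal → SExpr
    | quote  : SExpr → SExpr                    -- ⟨⟨e⟩⟩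
    | splice : SExpr → SExpr                    -- $(e)
  inductive SHandler : Type
    | retH : Ty0 → SExpr → SHandler
    | opH  : SHandler → OpName → Ty0 → Ty0 → SExpr → SHandler
      -- h; op(x : A, k : (B ⇒ξ T)) ↦ e  (annotations record the types of x and k)
end

/-! ### Core syntax of λ_AST(op) -/

/-- Classifier-free formal parameters are pairs of a name and a pre-type. -/
abbrev FPv := ℕ × PreTy

mutual
  /-- Normal forms. -/
  inductive NF : Type
    | var     : ℕ → NF
    | nat     : ℕ → NF
    | lam     : Tm → NF
    | kont    : Tm → NF
    | fp      : ℕ → PreTy → NF            -- a formal parameter α_R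
    | astNat  : ℕ → NF
    | astVar  : NF → NF
    | astLam  : NF → NF → NF
    | astApp  : NF → NF → NF
    | astCont : NF → NF → NF
    | astRet  : NF → NF
    | astDo   : NF → NF → NF → NF          -- Do(c₁, x, c₂)
    | astOp   : OpName → NF → NF
    | astHwith : NF → NF → NF
    | astHret  : NF → NF → NF
    | astHop   : NF → OpName → NF → NF → NF → NF
  /-- Terms. -/
  inductive Tm : Type
    | app    : NF → NF → Tm
    | ret    : NF → Tm
    | seq    : Tm → Tm → Tm
    | op     : OpName → NF → Tm
    | handle : Tm → Hd → Tm
    | resume : NF → NF → Tm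
    | check  : NF → Tm
    | checkM : NF → Tm
    | mkvar  : PreTy → Tm
    | dlet   : NF → Tm → Tm
    | tls    : Tm → Tm
    | err    : Tm
  /-- Handlers. -/
  inductive Hd : Type
    | retH : Tm → Hd
    | opH  : Hd → OpName → Tm → Hd
end

def liftR (f : ℕ → ℕ) : ℕ → ℕ
  | 0 => 0
  | n + 1 => f n + 1

mutual
  def NF.rename : NF → (ℕ → ℕ) → NF
    | .var n, f => .var (f n)
    | .nat m, _ => .nat m
    | .lam t, f => .lam (t.rename (liftR f))
    | .kont t, f => .kont (t.rename (liftR f))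
    | .fp a R, _ => .fp a R
    | .astNat m, _ => .astNat m
    | .astVar n, f => .astVar (n.rename f)
    | .astLam n₁ n₂, f => .astLam (n₁.rename f) (n₂.rename f)
    | .astApp n₁ n₂, f => .astApp (n₁.rename f) (n₂.rename f)
    | .astCont n₁ n₂, f => .astCont (n₁.rename f) (n₂.rename f)
    | .astRet n, f => .astRet (n.rename f)
    | .astDo n₁ n₂ n₃, f => .astDo (n₁.rename f) (n₂.rename f) (n₃.rename f)
    | .astOp o n, f => .astOp o (n.rename f)
    | .astHwith n₁ n₂, f => .astHwith (n₁.rename f) (n₂.rename f)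
    | .astHret n₁ n₂, f => .astHret (n₁.rename f) (n₂.rename f)
    | .astHop n₁ o n₂ n₃ n₄, f =>
        .astHop (n₁.rename f) o (n₂.rename f) (n₃.rename f) (n₄.rename f)
  def Tm.rename : Tm → (ℕ → ℕ) → Tm
    | .app n₁ n₂, f => .app (n₁.rename f) (n₂.rename f)
    | .ret n, f => .ret (n.rename f)
    | .seq t₁ t₂, f => .seq (t₁.rename f) (t₂.rename (liftR f))
    | .op o n, f => .op o (n.rename f)
    | .handle t h, f => .handle (t.rename f) (h.rename f)
    | .resume n₁ n₂, f => .resume (n₁.rename f) (n₂.rename f)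
    | .check n, f => .check (n.rename f)
    | .checkM n, f => .checkM (n.rename f)
    | .mkvar R, _ => .mkvar R
    | .dlet n t, f => .dlet (n.rename f) (t.rename f)
    | .tls t, f => .tls (t.rename f)
    | .err, _ => .err
  def Hd.rename : Hd → (ℕ → ℕ) → Hd
    | .retH t, f => .retH (t.rename (liftR f))
    | .opH h o t, f => .opH (h.rename f) o (t.rename (liftR (liftR f)))
end

def liftS (σ : ℕ → NF) : ℕ → NF
  | 0 => .var 0
  | n + 1 => (σ n).rename Nat.succ

mutual
  def NF.subst : NF → (ℕ → NF) → NF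
    | .var n, σ => σ n
    | .nat m, _ => .nat m
    | .lam t, σ => .lam (t.subst (liftS σ))
    | .kont t, σ => .kont (t.subst (liftS σ))
    | .fp a R, _ => .fp a R
    | .astNat m, _ => .astNat m
    | .astVar n, σ => .astVar (n.subst σ)
    | .astLam n₁ n₂, σ => .astLam (n₁.subst σ) (n₂.subst σ)
    | .astApp n₁ n₂, σ => .astApp (n₁.subst σ) (n₂.subst σ)
    | .astCont n₁ n₂, σ => .astCont (n₁.subst σ) (n₂.subst σ)
    | .astRet n, σ => .astRet (n.subst σ)
    | .astDo n₁ n₂ n₃, σ => .astDo (n₁.subst σ) (n₂.subst σ) (n₃.subst σ)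
    | .astOp o n, σ => .astOp o (n.subst σ)
    | .astHwith n₁ n₂, σ => .astHwith (n₁.subst σ) (n₂.subst σ)
    | .astHret n₁ n₂, σ => .astHret (n₁.subst σ) (n₂.subst σ)
    | .astHop n₁ o n₂ n₃ n₄, σ =>
        .astHop (n₁.subst σ) o (n₂.subst σ) (n₃.subst σ) (n₄.subst σ)
  def Tm.subst : Tm → (ℕ → NF) → Tm
    | .app n₁ n₂, σ => .app (n₁.subst σ) (n₂.subst σ)
    | .ret n, σ => .ret (n.subst σ)
    | .seq t₁ t₂, σ => .seq (t₁.subst σ) (t₂.subst (liftS σ))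
    | .op o n, σ => .op o (n.subst σ)
    | .handle t h, σ => .handle (t.subst σ) (h.subst σ)
    | .resume n₁ n₂, σ => .resume (n₁.subst σ) (n₂.subst σ)
    | .check n, σ => .check (n.subst σ)
    | .checkM n, σ => .checkM (n.subst σ)
    | .mkvar R, _ => .mkvar R
    | .dlet n t, σ => .dlet (n.subst σ) (t.subst σ)
    | .tls t, σ => .tls (t.subst σ)
    | .err, _ => .err
  def Hd.subst : Hd → (ℕ → NF) → Hd
    | .retH t, σ => .retH (t.subst (liftS σ))
    | .opH h o t, σ => .opH (h.subst σ) o (t.subst (liftS (liftS σ)))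
end

def Tm.subst1 (t : Tm) (n : NF) : Tm :=
  t.subst fun i => match i with | 0 => n | i + 1 => .var i

def Tm.subst2 (t : Tm) (nk nx : NF) : Tm :=
  t.subst fun i => match i with | 0 => nk | 1 => nx | i + 2 => .var i

def Hd.dom : Hd → Eff
  | .retH _ => ∅
  | .opH h o _ => insert o h.dom

def Hd.retClause : Hd → Tm
  | .retH t => t
  | .opH h _ _ => h.retClause

def Hd.lookup : Hd → OpName → Option Tm
  | .retH _, _ => none
  | .opH h o t, o' => if o = o' then some t else h.lookup o'

/-- The binding position of an AST binder, viewed as a (singleton or empty)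
set of formal parameters. -/
def NF.asParam : NF → Set FPv
  | .fp a R => {(a, R)}
  | _ => ∅

mutual
  /-- `FVs⁰(n)`: the free `Var`s of a normal form. -/
  def NF.fvs : NF → Set FPv
    | .var _ => ∅
    | .nat _ => ∅
    | .lam t => t.fvs
    | .kont t => t.fvs
    | .fp _ _ => ∅
    | .astNat _ => ∅
    | .astVar n => n.asParam ∪ n.fvs
    | .astLam n₁ n₂ => n₂.fvs \ n₁.asParam
    | .astApp n₁ n₂ => n₁.fvs ∪ n₂.fvs
    | .astCont n₁ n₂ => n₁.fvs ∪ n₂.fvs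
    | .astRet n => n.fvs
    | .astDo n₁ n₂ n₃ => n₁.fvs ∪ (n₃.fvs \ n₂.asParam)
    | .astOp _ n => n.fvs
    | .astHwith n₁ n₂ => n₁.fvs ∪ n₂.fvs
    | .astHret n₁ n₂ => n₂.fvs \ n₁.asParam
    | .astHop n₁ _ n₂ n₃ n₄ => n₁.fvs ∪ (n₄.fvs \ (n₂.asParam ∪ n₃.asParam))
  def Tm.fvs : Tm → Set FPv
    | .app n₁ n₂ => n₁.fvs ∪ n₂.fvs
    | .ret n => n.fvs
    | .seq t₁ t₂ => t₁.fvs ∪ t₂.fvs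
    | .op _ n => n.fvs
    | .handle t h => t.fvs ∪ h.fvs
    | .resume n₁ n₂ => n₁.fvs ∪ n₂.fvs
    | .check n => n.fvs
    | .checkM n => n.fvs
    | .mkvar _ => ∅
    | .dlet n t => t.fvs \ n.asParam
    | .tls t => t.fvs
    | .err => ∅
  def Hd.fvs : Hd → Set FPv
    | .retH t => t.fvs
    | .opH h _ t => h.fvs ∪ t.fvs
end

end MetaLang

namespace MetaLang

/-! ### Operational semantics of λ_AST(op) -/

/-- Evaluation frames. -/
inductive CFrame : Type
  | seqF    : Tm → CFrame                 -- do x ← [-] in t₂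
  | handleF : Hd → CFrame                 -- handle [-] with h
  | dletF   : ℕ → PreTy → CFrame          -- dlet(α_R, [-])
  | tlsF    : CFrame                      -- tls([-])

/-- Evaluation contexts, as stacks of frames (head innermost). -/
abbrev CCtx := List CFrame

def plugCF : CFrame → Tm → Tm
  | .seqF t₂, t => .seq t t₂
  | .handleF h, t => .handle t h
  | .dletF a R, t => .dlet (.fp a R) t
  | .tlsF, t => .tls t

/-- `E[t]`. -/
def plugC : CCtx → Tm → Tm
  | [], t => t
  | F :: E, t => plugC E (plugCF F t)

def handledC : CCtx → Eff
  | [] => ∅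
  | .handleF h :: E => handledC E ∪ h.dom
  | _ :: E => handledC E

/-- `π_FVs(E)`: the variables declared safe by `dlet` frames in an
evaluation context. -/
def piFVs : CCtx → Set FPv
  | [] => ∅
  | .dletF a R :: E => insert (a, R) (piFVs E)
  | _ :: E => piFVs E

/-- A deterministic source of fresh formal-parameter names. -/
def next (U : Finset ℕ) : ℕ := (U.sup id) + 1

/-- Configurations `⟨t; E; U; M; I⟩` of λ_AST(op). -/
structure Cfg : Type where
  tm : Tm
  ctx : CCtx
  used : Finset ℕ
  muted : Set FPv
  mark : WithTop ℕ

/-- The small-step operational semantics of λ_AST(op). -/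
inductive CStep : Cfg → Cfg → Prop
  | app {t : Tm} {n : NF} {E U M I} :
      CStep ⟨.app (.lam t) n, E, U, M, I⟩ ⟨t.subst1 n, E, U, M, I⟩
  | seq {n : NF} {t : Tm} {E U M I} :
      CStep ⟨.seq (.ret n) t, E, U, M, I⟩ ⟨t.subst1 n, E, U, M, I⟩
  | hdl {n : NF} {h : Hd} {E U M I} :
      CStep ⟨.handle (.ret n) h, E, U, M, I⟩ ⟨h.retClause.subst1 n, E, U, M, I⟩
  | pushSeq {t₁ t₂ : Tm} {E U M I} :
      CStep ⟨.seq t₁ t₂, E, U, M, I⟩ ⟨t₁, .seqF t₂ :: E, U, M, I⟩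
  | pushHandle {t : Tm} {h : Hd} {E U M I} :
      CStep ⟨.handle t h, E, U, M, I⟩ ⟨t, .handleF h :: E, U, M, I⟩
  | pushDlet {a R t E U M I} :
      CStep ⟨.dlet (.fp a R) t, E, U, M, I⟩ ⟨t, .dletF a R :: E, U, M, I⟩
  | pushTls {t E U M I} :
      CStep ⟨.tls t, E, U, M, I⟩ ⟨t, .tlsF :: E, U, M, I⟩
  | popSeq {n : NF} {t₂ : Tm} {E U M I} :
      CStep ⟨.ret n, .seqF t₂ :: E, U, M, I⟩ ⟨.seq (.ret n) t₂, E, U, M, I⟩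
  | popHandle {n : NF} {h : Hd} {E U M I} :
      CStep ⟨.ret n, .handleF h :: E, U, M, I⟩ ⟨.handle (.ret n) h, E, U, M, I⟩
  | gen {R : PreTy} {E U M I} :
      CStep ⟨.mkvar R, E, U, M, I⟩
            ⟨.ret (.fp (next U) R), E, insert (next U) U, M, I⟩
  | chs {n : NF} {E U M I} :
      n.fvs ⊆ piFVs E →
      CStep ⟨.check n, E, U, M, I⟩ ⟨.ret n, E, U, M, I⟩
  | chf {n : NF} {E U M I} :
      ¬ n.fvs ⊆ piFVs E →
      CStep ⟨.check n, E, U, M, I⟩ ⟨.err, E, U, M, I⟩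
  | cms {n : NF} {E U M I} :
      n.fvs \ M ⊆ piFVs E →
      CStep ⟨.checkM n, E, U, M, I⟩ ⟨.ret n, E, U, M, I⟩
  | cmf {n : NF} {E U M I} :
      ¬ n.fvs \ M ⊆ piFVs E →
      CStep ⟨.checkM n, E, U, M, I⟩ ⟨.err, E, U, M, I⟩
  | tls {n : NF} {E U M I} :
      CStep ⟨.ret n, .tlsF :: E, U, M, I⟩ ⟨.ret n, E, U, ∅, ⊤⟩
  | dlt {n : NF} {a R E U M} {I : WithTop ℕ} :
      CStep ⟨.ret n, .dletF a R :: E, U, M, I⟩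
            ⟨.ret n, E, U,
              if (E.length : WithTop ℕ) > I then M else ∅,
              if (E.length : WithTop ℕ) > I then I else ⊤⟩
  | op {h : Hd} {o : OpName} {n : NF} {t : Tm} (E₁ E₂ : CCtx) {U M} {I : WithTop ℕ} :
      h.lookup o = some t →
      o ∉ handledC E₂ →
      CStep ⟨.op o n, E₂ ++ .handleF h :: E₁, U, M, I⟩
            ⟨t.subst2 (.kont (.handle (plugC E₂ (.ret (.var 0))) h)) n,
              E₁, U, M ∪ piFVs E₂, min (E₁.length : WithTop ℕ) I⟩
  | resume {t : Tm} {n : NF} {E U M I} :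
      CStep ⟨.resume (.kont t) n, E, U, M, I⟩ ⟨t.subst1 n, E, U, M, I⟩

/-- Iterated reduction. -/
abbrev CSteps : Cfg → Cfg → Prop := Relation.ReflTransGen CStep

/-- The initial configuration for a core term. -/
def initCfg (t : Tm) : Cfg := ⟨t, [], ∅, ∅, ⊤⟩

/-- Divergence of a configuration. -/
def CDiverges (k : Cfg) : Prop :=
  ∃ f : ℕ → Cfg, f 0 = k ∧ ∀ n, CStep (f n) (f (n + 1))

/-- A configuration reaches the scope-extrusion error state. -/
def ReachesErr (t : Tm) : Prop :=
  ∃ (E : CCtx) (U : Finset ℕ) (M : Set FPv) (I : WithTop ℕ),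
    CSteps (initCfg t) ⟨.err, E, U, M, I⟩

/-- A normal form that is an AST (i.e. is of AST type). -/
def NF.isAST : NF → Prop
  | .astNat _ => True
  | .astVar _ => True
  | .astLam _ _ => True
  | .astApp _ _ => True
  | .astCont _ _ => True
  | .astRet _ => True
  | .astDo _ _ _ => True
  | .astOp _ _ => True
  | .astHwith _ _ => True
  | .astHret _ _ => True
  | .astHop _ _ _ _ _ => True
  | _ => False

/-- **Lazy scope extrusion** (Definition 4.3): the configuration returns, under
a top-level splice, an AST some of whose free variables are not declared safe. -/
def LazySE (k : Cfg) : Prop :=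
  ∃ (n : NF) (E' : CCtx),
    k.tm = .ret n ∧ n.isAST ∧ k.ctx = .tlsF :: E' ∧ ¬ n.fvs ⊆ piFVs k.ctx

/-- **Eager scope extrusion** (Definition 4.5): the configuration returns an
AST some of whose free variables are not declared safe. -/
def EagerSE (k : Cfg) : Prop :=
  ∃ n : NF, k.tm = .ret n ∧ n.isAST ∧ ¬ n.fvs ⊆ piFVs k.ctx

/-- **Inevitable scope extrusion** (Definition 4.7): the configuration must
reduce to a configuration exhibiting lazy scope extrusion. -/
def InevitableSE (k : Cfg) : Prop :=
  ∃ k' : Cfg, CSteps k k' ∧ LazySE k'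

end MetaLang

namespace MetaLang

/-! ### Types and typing of λ_AST(op) -/

/-- Core types of λ_AST(op). -/
inductive CTy : Type
  | nat    : CTy
  | fn     : CTy → Eff → CTy → CTy
  | cont   : CTy → Eff → CTy → CTy
  | fparam : PreTy → CTy                          -- FParam(R)
  | astV   : PreTy → CTy                          -- AST(R)
  | astC   : PreTy → Eff → CTy                    -- AST(R ! ξ)
  | astH   : PreTy → Eff → PreTy → Eff → CTy      -- AST(Q!ξ₁ ⇒ R!ξ₂)

/-- Types of AST kind. -/
def CTy.isAST : CTy → Prop
  | .astV _ => True
  | .astC _ _ => True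
  | .astH _ _ _ _ => True
  | _ => False

/-- Elaboration of level −1 types into core types. -/
def elabTy1 : Ty1 → CTy
  | .nat => .nat
  | .fn S Δ T => .fn (elabTy1 S) Δ (elabTy1 T)
  | .cont S Δ T => .cont (elabTy1 S) Δ (elabTy1 T)
  | .code T ξ => .astC (eraseTy T) ξ

abbrev CTCtx := List CTy

mutual
  /-- Core typing of normal forms: `Γ ⊢ n : T`. -/
  inductive NTy : Sig → CTCtx → NF → CTy → Prop
    | var {Sg Γ i T} : Γ[i]? = some T → NTy Sg Γ (.var i) T
    | nat {Sg Γ m} : NTy Sg Γ (.nat m) .nat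
    | lam {Sg Γ S T Δ t} :
        TTy Sg (S :: Γ) t T Δ → NTy Sg Γ (.lam t) (.fn S Δ T)
    | kont {Sg Γ S T Δ t} :
        TTy Sg (S :: Γ) t T Δ → NTy Sg Γ (.kont t) (.cont S Δ T)
    | fp {Sg Γ a R} : NTy Sg Γ (.fp a R) (.fparam R)
    | astNat {Sg Γ m} : NTy Sg Γ (.astNat m) (.astV .nat)
    | astVar {Sg Γ n R} :
        NTy Sg Γ n (.fparam R) → NTy Sg Γ (.astVar n) (.astV R)
    | astLam {Sg Γ n₁ n₂ Q R ξ} :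
        NTy Sg Γ n₁ (.fparam Q) → NTy Sg Γ n₂ (.astC R ξ) →
        NTy Sg Γ (.astLam n₁ n₂) (.astV (.fn Q ξ R))
    | astApp {Sg Γ n₁ n₂ Q R ξ} :
        NTy Sg Γ n₁ (.astV (.fn Q ξ R)) → NTy Sg Γ n₂ (.astV Q) →
        NTy Sg Γ (.astApp n₁ n₂) (.astC R ξ)
    | astCont {Sg Γ n₁ n₂ Q R ξ} :
        NTy Sg Γ n₁ (.astV (.cont Q ξ R)) → NTy Sg Γ n₂ (.astV Q) →
        NTy Sg Γ (.astCont n₁ n₂) (.astC R ξ)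
    | astRet {Sg Γ n R ξ} :
        NTy Sg Γ n (.astV R) → NTy Sg Γ (.astRet n) (.astC R ξ)
    | astDo {Sg Γ n₁ n₂ n₃ Q R ξ} :
        NTy Sg Γ n₁ (.astC Q ξ) → NTy Sg Γ n₂ (.fparam Q) →
        NTy Sg Γ n₃ (.astC R ξ) →
        NTy Sg Γ (.astDo n₁ n₂ n₃) (.astC R ξ)
    | astOp {Sg Γ o n ξ} :
        NTy Sg Γ n (.astV (eraseTy (Sg.arg0 o))) → o ∈ ξ →
        NTy Sg Γ (.astOp o n) (.astC (eraseTy (Sg.res0 o)) ξ)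
    | astHwith {Sg Γ n₁ n₂ Q R ξ₁ ξ₂} :
        NTy Sg Γ n₁ (.astC Q ξ₁) → NTy Sg Γ n₂ (.astH Q ξ₁ R ξ₂) →
        NTy Sg Γ (.astHwith n₁ n₂) (.astC R ξ₂)
    | astHret {Sg Γ n₁ n₂ Q R ξ₁ ξ₂} :
        NTy Sg Γ n₁ (.fparam Q) → NTy Sg Γ n₂ (.astC R ξ₂) →
        NTy Sg Γ (.astHret n₁ n₂) (.astH Q ξ₁ R ξ₂)
    | astHop {Sg Γ n₁ o n₂ n₃ n₄ Q R ξ₁ ξ₂} :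
        NTy Sg Γ n₁ (.astH Q ξ₁ R ξ₂) →
        NTy Sg Γ n₂ (.fparam (eraseTy (Sg.arg0 o))) →
        NTy Sg Γ n₃ (.fparam (.cont (eraseTy (Sg.res0 o)) ξ₂ R)) →
        NTy Sg Γ n₄ (.astC R ξ₂) →
        ξ₁ ⊆ ξ₂ ∪ {o} →
        NTy Sg Γ (.astHop n₁ o n₂ n₃ n₄) (.astH Q ξ₁ R ξ₂)
  /-- Core typing of terms: `Γ ⊢ t : T ! Δ`. -/
  inductive TTy : Sig → CTCtx → Tm → CTy → Eff → Prop
    | app {Sg Γ S T Δ n₁ n₂} :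
        NTy Sg Γ n₁ (.fn S Δ T) → NTy Sg Γ n₂ S → TTy Sg Γ (.app n₁ n₂) T Δ
    | resume {Sg Γ S T Δ n₁ n₂} :
        NTy Sg Γ n₁ (.cont S Δ T) → NTy Sg Γ n₂ S → TTy Sg Γ (.resume n₁ n₂) T Δ
    | ret {Sg Γ T Δ n} : NTy Sg Γ n T → TTy Sg Γ (.ret n) T Δ
    | seq {Sg Γ S T Δ t₁ t₂} :
        TTy Sg Γ t₁ S Δ → TTy Sg (S :: Γ) t₂ T Δ → TTy Sg Γ (.seq t₁ t₂) T Δ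
    | op {Sg Γ Δ o n} :
        NTy Sg Γ n (elabTy1 (Sg.arg1 o)) → o ∈ Δ →
        TTy Sg Γ (.op o n) (elabTy1 (Sg.res1 o)) Δ
    | handle {Sg Γ S T Δ₁ Δ₂ t h} :
        TTy Sg Γ t S Δ₁ → HTy Sg Γ h S Δ₁ T Δ₂ →
        (∀ o ∈ Δ₁, o ∉ Δ₂ → o ∈ h.dom) →
        TTy Sg Γ (.handle t h) T Δ₂
    | check {Sg Γ T Δ n} :
        NTy Sg Γ n T → T.isAST → TTy Sg Γ (.check n) T Δ
    | checkM {Sg Γ T Δ n} :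
        NTy Sg Γ n T → T.isAST → TTy Sg Γ (.checkM n) T Δ
    | mkvar {Sg Γ R Δ} : TTy Sg Γ (.mkvar R) (.fparam R) Δ
    | dlet {Sg Γ T Δ R n t} :
        NTy Sg Γ n (.fparam R) → TTy Sg Γ t T Δ → TTy Sg Γ (.dlet n t) T Δ
    | tls {Sg Γ T Δ t} : TTy Sg Γ t T Δ → TTy Sg Γ (.tls t) T Δ
    | err {Sg Γ T Δ} : TTy Sg Γ .err T Δ
  /-- Core typing of handlers: `Γ ⊢ h : S!Δ₁ ⇒ T!Δ₂`. -/
  inductive HTy : Sig → CTCtx → Hd → CTy → Eff → CTy → Eff → Prop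
    | retH {Sg Γ S T Δ₁ Δ₂ t} :
        TTy Sg (S :: Γ) t T Δ₂ → HTy Sg Γ (.retH t) S Δ₁ T Δ₂
    | opH {Sg Γ S T Δ₁ Δ₂ o h t} :
        HTy Sg Γ h S Δ₁ T Δ₂ →
        TTy Sg (CTy.cont (elabTy1 (Sg.res1 o)) Δ₂ T :: elabTy1 (Sg.arg1 o) :: Γ) t T Δ₂ →
        Δ₁ ⊆ Δ₂ ∪ {o} →
        o ∉ h.dom →
        HTy Sg Γ (.opH h o t) S Δ₁ T Δ₂
end

/-! ### Typing of λ_op-quote -/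

/-- `dom` of a source handler. -/
def SHandler.dom : SHandler → Eff
  | .retH _ _ => ∅
  | .opH h o _ _ _ => insert o h.dom


/-- Typing context entries: level 0 or level −1 variables. -/
inductive SEntry : Type
  | lvl0 : Ty0 → SEntry
  | lvl1 : Ty1 → SEntry

abbrev SCtx := List SEntry

mutual
  /-- `Γ ⊢_{c|q} v : T⁰ ! Δ` (c- and q-mode value typing coincide). -/
  inductive QVal : Sig → SCtx → SVal → Ty0 → Eff → Prop
    | var {Sg Γ i T Δ} : Γ[i]? = some (.lvl0 T) → QVal Sg Γ (.var i) T Δ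
    | nat {Sg Γ m Δ} : QVal Sg Γ (.nat m) .nat Δ
    | lam {Sg Γ S T Δ ξ e} :
        QExpr Sg (SEntry.lvl0 S :: Γ) e T Δ ξ →
        QVal Sg Γ (.lam S e) (.fn S ξ T) Δ
  /-- `Γ ⊢_{c|q} e : T⁰ ! Δ;ξ`. -/
  inductive QExpr : Sig → SCtx → SExpr → Ty0 → Eff → Eff → Prop
    | app {Sg Γ S T Δ ξ v₁ v₂} :
        QVal Sg Γ v₁ (.fn S ξ T) Δ → QVal Sg Γ v₂ S Δ →
        QExpr Sg Γ (.app v₁ v₂) T Δ ξ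
    | resume {Sg Γ S T Δ ξ v₁ v₂} :
        QVal Sg Γ v₁ (.cont S ξ T) Δ → QVal Sg Γ v₂ S Δ →
        QExpr Sg Γ (.resume v₁ v₂) T Δ ξ
    | ret {Sg Γ T Δ ξ v} : QVal Sg Γ v T Δ → QExpr Sg Γ (.ret v) T Δ ξ
    | seq {Sg Γ S T Δ ξ e₁ e₂} :
        QExpr Sg Γ e₁ S Δ ξ → QExpr Sg (SEntry.lvl0 S :: Γ) e₂ T Δ ξ →
        QExpr Sg Γ (.seq S e₁ e₂) T Δ ξ
    | op {Sg Γ Δ ξ o v} :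
        QVal Sg Γ v (Sg.arg0 o) Δ → o ∈ ξ →
        QExpr Sg Γ (.op o v) (Sg.res0 o) Δ ξ
    | handle {Sg Γ S T Δ ξ₁ ξ₂ e h} :
        QExpr Sg Γ e S Δ ξ₁ → QHdl Sg Γ h S ξ₁ T ξ₂ Δ →
        (∀ o ∈ ξ₁, o ∉ ξ₂ → o ∈ h.dom) →
        QExpr Sg Γ (.handle e h) T Δ ξ₂
    | splice {Sg Γ T Δ ξ e} :
        SExprT Sg Γ e (.code T ξ) Δ →
        QExpr Sg Γ (.splice e) T Δ ξ
  /-- `Γ ⊢_{c|q} h : (S!ξ₁ ⇒ T!ξ₂)⁰ ! Δ`. -/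
  inductive QHdl : Sig → SCtx → SHandler → Ty0 → Eff → Ty0 → Eff → Eff → Prop
    | retH {Sg Γ S T ξ₁ ξ₂ Δ e} :
        QExpr Sg (SEntry.lvl0 S :: Γ) e T Δ ξ₂ →
        QHdl Sg Γ (.retH S e) S ξ₁ T ξ₂ Δ
    | opH {Sg Γ S T ξ₁ ξ₂ Δ o h e} :
        QHdl Sg Γ h S ξ₁ T ξ₂ Δ →
        QExpr Sg (SEntry.lvl0 (Ty0.cont (Sg.res0 o) ξ₂ T) :: SEntry.lvl0 (Sg.arg0 o) :: Γ)
          e T Δ ξ₂ →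
        ξ₁ ⊆ ξ₂ ∪ {o} →
        QHdl Sg Γ (.opH h o (Sg.arg0 o) (Ty0.cont (Sg.res0 o) ξ₂ T) e) S ξ₁ T ξ₂ Δ
  /-- `Γ ⊢_s v : T⁻¹`. -/
  inductive SValT : Sig → SCtx → SVal → Ty1 → Prop
    | var {Sg Γ i T} : Γ[i]? = some (.lvl1 T) → SValT Sg Γ (.var i) T
    | nat {Sg Γ m} : SValT Sg Γ (.nat m) .nat
    | lam {Sg Γ A S T Δ e} :
        SExprT Sg (SEntry.lvl1 S :: Γ) e T Δ →
        SValT Sg Γ (.lam A e) (.fn S Δ T)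
  /-- `Γ ⊢_s e : T⁻¹ ! Δ`. -/
  inductive SExprT : Sig → SCtx → SExpr → Ty1 → Eff → Prop
    | app {Sg Γ S T Δ v₁ v₂} :
        SValT Sg Γ v₁ (.fn S Δ T) → SValT Sg Γ v₂ S →
        SExprT Sg Γ (.app v₁ v₂) T Δ
    | resume {Sg Γ S T Δ v₁ v₂} :
        SValT Sg Γ v₁ (.cont S Δ T) → SValT Sg Γ v₂ S →
        SExprT Sg Γ (.resume v₁ v₂) T Δ
    | ret {Sg Γ T Δ v} : SValT Sg Γ v T → SExprT Sg Γ (.ret v) T Δ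
    | seq {Sg Γ A S T Δ e₁ e₂} :
        SExprT Sg Γ e₁ S Δ → SExprT Sg (SEntry.lvl1 S :: Γ) e₂ T Δ →
        SExprT Sg Γ (.seq A e₁ e₂) T Δ
    | op {Sg Γ Δ o v} :
        SValT Sg Γ v (Sg.arg1 o) → o ∈ Δ →
        SExprT Sg Γ (.op o v) (Sg.res1 o) Δ
    | handle {Sg Γ S T Δ₁ Δ₂ e h} :
        SExprT Sg Γ e S Δ₁ → SHdlT Sg Γ h S Δ₁ T Δ₂ →
        (∀ o ∈ Δ₁, o ∉ Δ₂ → o ∈ h.dom) →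
        SExprT Sg Γ (.handle e h) T Δ₂
    | quote {Sg Γ T Δ ξ e} :
        QExpr Sg Γ e T Δ ξ →
        SExprT Sg Γ (.quote e) (.code T ξ) Δ
  /-- `Γ ⊢_s h : (S!Δ₁ ⇒ T!Δ₂)⁻¹`. -/
  inductive SHdlT : Sig → SCtx → SHandler → Ty1 → Eff → Ty1 → Eff → Prop
    | retH {Sg Γ A S T Δ₁ Δ₂ e} :
        SExprT Sg (SEntry.lvl1 S :: Γ) e T Δ₂ →
        SHdlT Sg Γ (.retH A e) S Δ₁ T Δ₂
    | opH {Sg Γ A B S T Δ₁ Δ₂ o h e} :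
        SHdlT Sg Γ h S Δ₁ T Δ₂ →
        SExprT Sg (SEntry.lvl1 (Ty1.cont (Sg.res1 o) Δ₂ T) :: SEntry.lvl1 (Sg.arg1 o) :: Γ)
          e T Δ₂ →
        Δ₁ ⊆ Δ₂ ∪ {o} →
        SHdlT Sg Γ (.opH h o A B e) S Δ₁ T Δ₂
end

/-- Elaboration of context entries. -/
def elabEntry : SEntry → CTy
  | .lvl0 T => .fparam (eraseTy T)
  | .lvl1 T => elabTy1 T

/-- Elaboration of typing contexts. -/
def elabCtx (Γ : SCtx) : CTCtx := Γ.map elabEntry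

end MetaLang

namespace MetaLang

/-! ### Elaboration from λ_op-quote to λ_AST(op)

The elaboration is parameterised by a *flavor*: the naïve elaboration (no
checks), the lazy check, the eager check, and the C4C (Cause-for-Concern)
check, which differ only in where `check`/`checkM`/`dlet` are inserted. -/

inductive Flavor : Type
  | naive | lazy | eager | be
deriving DecidableEq

/-- How an AST construction in q-mode is returned. -/
def qWrap : Flavor → NF → Tm
  | .naive, n => .ret n
  | .lazy, n => .ret n
  | .eager, n => .check n
  | .be, n => .checkM n

/-- How an AST construction is returned (c-mode constructions are plain). -/
def wrapC (isC : Bool) (fl : Flavor) (n : NF) : Tm :=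
  if isC then .ret n else qWrap fl n

def dlets (xs : List ℕ) (t : Tm) : Tm :=
  xs.foldr (fun i s => Tm.dlet (.var i) s) t

/-- The treatment of binders: the naïve elaboration inserts nothing; the lazy
check inserts `dlet`s at c-mode binders; the eager and C4C checks additionally
insert `dlet`s followed by a `check` (resp. `checkM`) at q-mode binders. -/
def dletWrap (isC : Bool) (fl : Flavor) (xs : List ℕ) (t : Tm) : Tm :=
  if isC then
    match fl with
    | .naive => t
    | _ => dlets xs t
  else
    match fl with
    | .naive => t
    | .lazy => t
    | .eager => .seq (dlets xs t) (.check (.var 0))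
    | .be => .seq (dlets xs t) (.checkM (.var 0))

/-- The treatment of top-level splices: the lazy and eager checks `check` the
result of the top-level splice, the C4C check `checkM`s it. -/
def topWrap (fl : Flavor) (t : Tm) : Tm :=
  match fl with
  | .naive => t
  | .lazy => .seq t (.check (.var 0))
  | .eager => .seq t (.check (.var 0))
  | .be => .seq t (.checkM (.var 0))

mutual
  /-- Elaboration of values in c-mode (`isC = true`) or q-mode (`isC = false`). -/
  def elabV (fl : Flavor) (isC : Bool) : SVal → Tm
    | .var i => wrapC isC fl (.astVar (.var i))
    | .nat m => wrapC isC fl (.astNat m)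
    | .lam T e =>
        .seq (.mkvar (eraseTy T))
          (dletWrap isC fl [0]
            (.seq (elabE fl isC e) (.ret (.astLam (.var 1) (.var 0)))))
  /-- Elaboration of expressions in c-mode or q-mode. -/
  def elabE (fl : Flavor) (isC : Bool) : SExpr → Tm
    | .app v₁ v₂ =>
        .seq (elabV fl isC v₁)
          (.seq ((elabV fl isC v₂).rename Nat.succ)
            (wrapC isC fl (.astApp (.var 1) (.var 0))))
    | .ret v => .seq (elabV fl isC v) (wrapC isC fl (.astRet (.var 0)))
    | .seq T e₁ e₂ =>
        .seq (elabE fl isC e₁)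
          (.seq (.mkvar (eraseTy T))
            (dletWrap isC fl [0]
              (.seq ((elabE fl isC e₂).rename (liftR Nat.succ))
                (.ret (.astDo (.var 2) (.var 1) (.var 0))))))
    | .op o v => .seq (elabV fl isC v) (wrapC isC fl (.astOp o (.var 0)))
    | .handle e h =>
        .seq (elabE fl isC e)
          (.seq ((elabH fl isC h).rename Nat.succ)
            (wrapC isC fl (.astHwith (.var 1) (.var 0))))
    | .resume v₁ v₂ =>
        .seq (elabV fl isC v₁)
          (.seq ((elabV fl isC v₂).rename Nat.succ)
            (wrapC isC fl (.astCont (.var 1) (.var 0))))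
    | .quote e => elabE fl isC e          -- (quotes are ill-typed in c/q-mode)
    | .splice e => if isC then topWrap fl (.tls (elabEs fl e)) else elabEs fl e
  /-- Elaboration of handlers in c-mode or q-mode. -/
  def elabH (fl : Flavor) (isC : Bool) : SHandler → Tm
    | .retH T e =>
        .seq (.mkvar (eraseTy T))
          (dletWrap isC fl [0]
            (.seq (elabE fl isC e) (.ret (.astHret (.var 1) (.var 0)))))
    | .opH h o Tx Tk e =>
        .seq (elabH fl isC h)
          (.seq (.mkvar (eraseTy Tx))
            (.seq ((.mkvar (eraseTy Tk) : Tm).rename Nat.succ)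
              (dletWrap isC fl [1, 0]
                (.seq ((elabE fl isC e).rename (liftR (liftR Nat.succ)))
                  (.ret (.astHop (.var 3) o (.var 2) (.var 1) (.var 0)))))))
  /-- Elaboration of values in s-mode (essentially the identity). -/
  def elabVs (fl : Flavor) : SVal → NF
    | .var i => .var i
    | .nat m => .nat m
    | .lam _ e => .lam (elabEs fl e)
  /-- Elaboration of expressions in s-mode. -/
  def elabEs (fl : Flavor) : SExpr → Tm
    | .app v₁ v₂ => .app (elabVs fl v₁) (elabVs fl v₂)
    | .ret v => .ret (elabVs fl v)
    | .seq _ e₁ e₂ => .seq (elabEs fl e₁) (elabEs fl e₂)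
    | .op o v => .op o (elabVs fl v)
    | .handle e h => .handle (elabEs fl e) (elabHs fl h)
    | .resume v₁ v₂ => .resume (elabVs fl v₁) (elabVs fl v₂)
    | .quote e => elabE fl false e
    | .splice e => elabEs fl e            -- (splices are ill-typed in s-mode)
  /-- Elaboration of handlers in s-mode. -/
  def elabHs (fl : Flavor) : SHandler → Hd
    | .retH _ e => .retH (elabEs fl e)
    | .opH h o _ _ e => .opH (elabHs fl h) o (elabEs fl e)
end

/-- The naïve elaboration `⟦e⟧` of a (c-mode) λ_op-quote expression. -/
def elabNaive (e : SExpr) : Tm := elabE .naive true e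
/-- The lazy-check elaboration `⟦e⟧^Lazy`. -/
def elabLazy (e : SExpr) : Tm := elabE .lazy true e
/-- The eager-check elaboration `⟦e⟧^Eager`. -/
def elabEager (e : SExpr) : Tm := elabE .eager true e
/-- The C4C-check elaboration `⟦e⟧^BE`. -/
def elabBE (e : SExpr) : Tm := elabE .be true e

/-- A closed, well-typed λ_op-quote expression: it types in compile mode with
empty compile-time and run-time effect sets. -/
def SWellTyped (Sg : Sig) (e : SExpr) : Prop :=
  ∃ T : Ty0, QExpr Sg [] e T ∅ ∅

/-- `Safe`: closed well-typed expressions whose lazy-check elaboration never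
reduces to `err`. -/
def Safe (Sg : Sig) (e : SExpr) : Prop :=
  SWellTyped Sg e ∧ ¬ ReachesErr (elabLazy e)

end MetaLang

namespace MetaLang

/-! ### Auxiliary development for type safety -/

/-- Simplified core types used for the safety invariant. -/
inductive MTy : Type
  | nat : MTy
  | fn : MTy → Eff → MTy → MTy
  | cont : MTy → Eff → MTy → MTy
  | fparam : MTy
  | ast : MTy

/-- Simplified translation of level −1 types. -/
def mty : Ty1 → MTy
  | .nat => .ast
  | .fn S Δ T => .fn (mty S) Δ (mty T)
  | .cont S Δ T => .cont (mty S) Δ (mty T)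
  | .code _ _ => .ast

abbrev MCtx := List MTy

def mentry : SEntry → MTy
  | .lvl0 _ => .fparam
  | .lvl1 T => mty T

def mctx (Γ : SCtx) : MCtx := Γ.map mentry

/-- Judgement forms. -/
inductive Jdg : Type
  | v : MCtx → NF → MTy → Jdg
  | t : MCtx → Tm → MTy → Eff → Jdg
  | h : MCtx → Hd → MTy → Eff → MTy → Eff → Jdg

/-- The simplified typing judgement. -/
inductive J (Sg : Sig) : Jdg → Prop
  | vvar {Γ i T} : Γ[i]? = some T → J Sg (.v Γ (.var i) T)
  | vnat {Γ m} : J Sg (.v Γ (.nat m) .ast)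
  | vlam {Γ S Δ T t} : J Sg (.t (S :: Γ) t T Δ) → J Sg (.v Γ (.lam t) (.fn S Δ T))
  | vkont {Γ S Δ T t} : J Sg (.t (S :: Γ) t T Δ) → J Sg (.v Γ (.kont t) (.cont S Δ T))
  | vfp {Γ a R} : J Sg (.v Γ (.fp a R) .fparam)
  | vastNat {Γ m} : J Sg (.v Γ (.astNat m) .ast)
  | vastVar {Γ n T} : J Sg (.v Γ n T) → J Sg (.v Γ (.astVar n) .ast)
  | vastLam {Γ n₁ n₂ T₁ T₂} : J Sg (.v Γ n₁ T₁) → J Sg (.v Γ n₂ T₂) →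
      J Sg (.v Γ (.astLam n₁ n₂) .ast)
  | vastApp {Γ n₁ n₂ T₁ T₂} : J Sg (.v Γ n₁ T₁) → J Sg (.v Γ n₂ T₂) →
      J Sg (.v Γ (.astApp n₁ n₂) .ast)
  | vastCont {Γ n₁ n₂ T₁ T₂} : J Sg (.v Γ n₁ T₁) → J Sg (.v Γ n₂ T₂) →
      J Sg (.v Γ (.astCont n₁ n₂) .ast)
  | vastRet {Γ n T} : J Sg (.v Γ n T) → J Sg (.v Γ (.astRet n) .ast)
  | vastDo {Γ n₁ n₂ n₃ T₁ T₂ T₃} : J Sg (.v Γ n₁ T₁) → J Sg (.v Γ n₂ T₂) →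
      J Sg (.v Γ n₃ T₃) → J Sg (.v Γ (.astDo n₁ n₂ n₃) .ast)
  | vastOp {Γ o n T} : J Sg (.v Γ n T) → J Sg (.v Γ (.astOp o n) .ast)
  | vastHwith {Γ n₁ n₂ T₁ T₂} : J Sg (.v Γ n₁ T₁) → J Sg (.v Γ n₂ T₂) →
      J Sg (.v Γ (.astHwith n₁ n₂) .ast)
  | vastHret {Γ n₁ n₂ T₁ T₂} : J Sg (.v Γ n₁ T₁) → J Sg (.v Γ n₂ T₂) →
      J Sg (.v Γ (.astHret n₁ n₂) .ast)
  | vastHop {Γ n₁ o n₂ n₃ n₄ T₁ T₂ T₃ T₄} : J Sg (.v Γ n₁ T₁) → J Sg (.v Γ n₂ T₂) →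
      J Sg (.v Γ n₃ T₃) → J Sg (.v Γ n₄ T₄) →
      J Sg (.v Γ (.astHop n₁ o n₂ n₃ n₄) .ast)
  | tapp {Γ S Δ T n₁ n₂} : J Sg (.v Γ n₁ (.fn S Δ T)) → J Sg (.v Γ n₂ S) →
      J Sg (.t Γ (.app n₁ n₂) T Δ)
  | tresume {Γ S Δ T n₁ n₂} : J Sg (.v Γ n₁ (.cont S Δ T)) → J Sg (.v Γ n₂ S) →
      J Sg (.t Γ (.resume n₁ n₂) T Δ)
  | tret {Γ T Δ n} : J Sg (.v Γ n T) → J Sg (.t Γ (.ret n) T Δ)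
  | tseq {Γ S T Δ t₁ t₂} : J Sg (.t Γ t₁ S Δ) → J Sg (.t (S :: Γ) t₂ T Δ) →
      J Sg (.t Γ (.seq t₁ t₂) T Δ)
  | top {Γ Δ o n} : J Sg (.v Γ n (mty (Sg.arg1 o))) → o ∈ Δ →
      J Sg (.t Γ (.op o n) (mty (Sg.res1 o)) Δ)
  | thandle {Γ S T Δ₁ Δ₂ t h} : J Sg (.t Γ t S Δ₁) → J Sg (.h Γ h S Δ₁ T Δ₂) →
      (∀ o ∈ Δ₁, o ∉ Δ₂ → o ∈ h.dom) →
      J Sg (.t Γ (.handle t h) T Δ₂)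
  | tcheck {Γ T Δ n} : J Sg (.v Γ n T) → J Sg (.t Γ (.check n) T Δ)
  | tcheckM {Γ T Δ n} : J Sg (.v Γ n T) → J Sg (.t Γ (.checkM n) T Δ)
  | tmkvar {Γ R Δ} : J Sg (.t Γ (.mkvar R) .fparam Δ)
  | tdlet {Γ T Δ n t} : J Sg (.v Γ n .fparam) → J Sg (.t Γ t T Δ) →
      J Sg (.t Γ (.dlet n t) T Δ)
  | ttls {Γ T Δ t} : J Sg (.t Γ t T Δ) → J Sg (.t Γ (.tls t) T Δ)
  | terr {Γ T Δ} : J Sg (.t Γ .err T Δ)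
  | hret {Γ S Δ₁ T Δ₂ t} : J Sg (.t (S :: Γ) t T Δ₂) →
      J Sg (.h Γ (.retH t) S Δ₁ T Δ₂)
  | hop {Γ S Δ₁ T Δ₂ o h t} : J Sg (.h Γ h S Δ₁ T Δ₂) →
      J Sg (.t (MTy.cont (mty (Sg.res1 o)) Δ₂ T :: mty (Sg.arg1 o) :: Γ) t T Δ₂) →
      J Sg (.h Γ (.opH h o t) S Δ₁ T Δ₂)

/-- Renaming of a judgement form. -/
def Jdg.ren : Jdg → MCtx → (ℕ → ℕ) → Jdg
  | .v _ n T, Γ', f => .v Γ' (n.rename f) T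
  | .t _ tm T Δ, Γ', f => .t Γ' (tm.rename f) T Δ
  | .h _ hh S Δ₁ T Δ₂, Γ', f => .h Γ' (hh.rename f) S Δ₁ T Δ₂

def Jdg.ctx : Jdg → MCtx
  | .v Γ _ _ => Γ
  | .t Γ _ _ _ => Γ
  | .h Γ _ _ _ _ _ => Γ

def Good (f : ℕ → ℕ) (Γ Γ' : MCtx) : Prop :=
  ∀ i T, Γ[i]? = some T → Γ'[f i]? = some T

theorem Good.lift {f Γ Γ'} (h : Good f Γ Γ') (S : MTy) :
    Good (liftR f) (S :: Γ) (S :: Γ') := by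
  intro i T hi
  cases i with
  | zero => simp only [liftR]; simpa using hi
  | succ i => simpa [liftR] using h i T (by simpa using hi)

theorem Hd.dom_rename : ∀ (h : Hd) (f), (Hd.rename h f).dom = h.dom
  | .retH _, _ => rfl
  | .opH h o t, f => by
      show Hd.dom (.opH (h.rename f) o (t.rename (liftR (liftR f)))) = _
      simp [Hd.dom, Hd.dom_rename h f]

theorem J.renameJ {Sg j} (hj : J Sg j) :
    ∀ Γ' f, Good f j.ctx Γ' → J Sg (j.ren Γ' f) := by
  induction hj with
  | vvar h => intro Γ' f hg; dsimp only [Jdg.ren, Jdg.ctx] at *; exact .vvar (hg _ _ h)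
  | vnat => intro Γ' f hg; dsimp only [Jdg.ren, Jdg.ctx] at *; exact .vnat
  | vlam _ ih => intro Γ' f hg; dsimp only [Jdg.ren, Jdg.ctx] at *; exact .vlam (ih _ _ (hg.lift _))
  | vkont _ ih => intro Γ' f hg; dsimp only [Jdg.ren, Jdg.ctx] at *; exact .vkont (ih _ _ (hg.lift _))
  | vfp => intro Γ' f hg; dsimp only [Jdg.ren, Jdg.ctx] at *; exact .vfp
  | vastNat => intro Γ' f hg; dsimp only [Jdg.ren, Jdg.ctx] at *; exact .vastNat
  | vastVar _ ih => intro Γ' f hg; dsimp only [Jdg.ren, Jdg.ctx] at *; exact .vastVar (ih _ _ hg)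
  | vastLam _ _ ih₁ ih₂ => intro Γ' f hg; dsimp only [Jdg.ren, Jdg.ctx] at *; exact .vastLam (ih₁ _ _ hg) (ih₂ _ _ hg)
  | vastApp _ _ ih₁ ih₂ => intro Γ' f hg; dsimp only [Jdg.ren, Jdg.ctx] at *; exact .vastApp (ih₁ _ _ hg) (ih₂ _ _ hg)
  | vastCont _ _ ih₁ ih₂ => intro Γ' f hg; dsimp only [Jdg.ren, Jdg.ctx] at *; exact .vastCont (ih₁ _ _ hg) (ih₂ _ _ hg)
  | vastRet _ ih => intro Γ' f hg; dsimp only [Jdg.ren, Jdg.ctx] at *; exact .vastRet (ih _ _ hg)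
  | vastDo _ _ _ ih₁ ih₂ ih₃ =>
      intro Γ' f hg; dsimp only [Jdg.ren, Jdg.ctx] at *; exact .vastDo (ih₁ _ _ hg) (ih₂ _ _ hg) (ih₃ _ _ hg)
  | vastOp _ ih => intro Γ' f hg; dsimp only [Jdg.ren, Jdg.ctx] at *; exact .vastOp (ih _ _ hg)
  | vastHwith _ _ ih₁ ih₂ => intro Γ' f hg; dsimp only [Jdg.ren, Jdg.ctx] at *; exact .vastHwith (ih₁ _ _ hg) (ih₂ _ _ hg)
  | vastHret _ _ ih₁ ih₂ => intro Γ' f hg; dsimp only [Jdg.ren, Jdg.ctx] at *; exact .vastHret (ih₁ _ _ hg) (ih₂ _ _ hg)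
  | vastHop _ _ _ _ ih₁ ih₂ ih₃ ih₄ =>
      intro Γ' f hg; dsimp only [Jdg.ren, Jdg.ctx] at *; exact .vastHop (ih₁ _ _ hg) (ih₂ _ _ hg) (ih₃ _ _ hg) (ih₄ _ _ hg)
  | tapp _ _ ih₁ ih₂ => intro Γ' f hg; dsimp only [Jdg.ren, Jdg.ctx] at *; exact .tapp (ih₁ _ _ hg) (ih₂ _ _ hg)
  | tresume _ _ ih₁ ih₂ => intro Γ' f hg; dsimp only [Jdg.ren, Jdg.ctx] at *; exact .tresume (ih₁ _ _ hg) (ih₂ _ _ hg)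
  | tret _ ih => intro Γ' f hg; dsimp only [Jdg.ren, Jdg.ctx] at *; exact .tret (ih _ _ hg)
  | tseq _ _ ih₁ ih₂ => intro Γ' f hg; dsimp only [Jdg.ren, Jdg.ctx] at *; exact .tseq (ih₁ _ _ hg) (ih₂ _ _ (hg.lift _))
  | top _ ho ih => intro Γ' f hg; dsimp only [Jdg.ren, Jdg.ctx] at *; exact .top (ih _ _ hg) ho
  | thandle _ _ hdom ih₁ ih₂ =>
      intro Γ' f hg; dsimp only [Jdg.ren, Jdg.ctx] at *
      exact .thandle (ih₁ _ _ hg) (ih₂ _ _ hg) (by simpa [Hd.dom_rename] using hdom)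
  | tcheck _ ih => intro Γ' f hg; dsimp only [Jdg.ren, Jdg.ctx] at *; exact .tcheck (ih _ _ hg)
  | tcheckM _ ih => intro Γ' f hg; dsimp only [Jdg.ren, Jdg.ctx] at *; exact .tcheckM (ih _ _ hg)
  | tmkvar => intro Γ' f hg; dsimp only [Jdg.ren, Jdg.ctx] at *; exact .tmkvar
  | tdlet _ _ ih₁ ih₂ => intro Γ' f hg; dsimp only [Jdg.ren, Jdg.ctx] at *; exact .tdlet (ih₁ _ _ hg) (ih₂ _ _ hg)
  | ttls _ ih => intro Γ' f hg; dsimp only [Jdg.ren, Jdg.ctx] at *; exact .ttls (ih _ _ hg)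
  | terr => intro Γ' f hg; dsimp only [Jdg.ren, Jdg.ctx] at *; exact .terr
  | hret _ ih => intro Γ' f hg; dsimp only [Jdg.ren, Jdg.ctx] at *; exact .hret (ih _ _ (hg.lift _))
  | hop _ _ ih₁ ih₂ =>
      intro Γ' f hg; dsimp only [Jdg.ren, Jdg.ctx] at *; exact .hop (ih₁ _ _ hg) (ih₂ _ _ ((hg.lift _).lift _))

theorem liftR_id : liftR id = id := by
  funext i; cases i <;> simp [liftR]

mutual
theorem NF.rename_id : ∀ n : NF, n.rename id = n
  | .var _ => rfl
  | .nat _ => rfl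
  | .lam t => by show NF.lam (t.rename (liftR id)) = _; rw [liftR_id, Tm.rename_id]
  | .kont t => by show NF.kont (t.rename (liftR id)) = _; rw [liftR_id, Tm.rename_id]
  | .fp _ _ => rfl
  | .astNat _ => rfl
  | .astVar n => by show NF.astVar (n.rename id) = _; rw [NF.rename_id]
  | .astLam n₁ n₂ => by
      show NF.astLam (n₁.rename id) (n₂.rename id) = _
      rw [NF.rename_id, NF.rename_id]
  | .astApp n₁ n₂ => by
      show NF.astApp (n₁.rename id) (n₂.rename id) = _
      rw [NF.rename_id, NF.rename_id]
  | .astCont n₁ n₂ => by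
      show NF.astCont (n₁.rename id) (n₂.rename id) = _
      rw [NF.rename_id, NF.rename_id]
  | .astRet n => by show NF.astRet (n.rename id) = _; rw [NF.rename_id]
  | .astDo n₁ n₂ n₃ => by
      show NF.astDo (n₁.rename id) (n₂.rename id) (n₃.rename id) = _
      rw [NF.rename_id, NF.rename_id, NF.rename_id]
  | .astOp o n => by show NF.astOp o (n.rename id) = _; rw [NF.rename_id]
  | .astHwith n₁ n₂ => by
      show NF.astHwith (n₁.rename id) (n₂.rename id) = _
      rw [NF.rename_id, NF.rename_id]
  | .astHret n₁ n₂ => by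
      show NF.astHret (n₁.rename id) (n₂.rename id) = _
      rw [NF.rename_id, NF.rename_id]
  | .astHop n₁ o n₂ n₃ n₄ => by
      show NF.astHop (n₁.rename id) o (n₂.rename id) (n₃.rename id) (n₄.rename id) = _
      rw [NF.rename_id, NF.rename_id, NF.rename_id, NF.rename_id]
theorem Tm.rename_id : ∀ t : Tm, t.rename id = t
  | .app n₁ n₂ => by
      show Tm.app (n₁.rename id) (n₂.rename id) = _
      rw [NF.rename_id, NF.rename_id]
  | .ret n => by show Tm.ret (n.rename id) = _; rw [NF.rename_id]
  | .seq t₁ t₂ => by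
      show Tm.seq (t₁.rename id) (t₂.rename (liftR id)) = _
      rw [liftR_id, Tm.rename_id, Tm.rename_id]
  | .op o n => by show Tm.op o (n.rename id) = _; rw [NF.rename_id]
  | .handle t h => by
      show Tm.handle (t.rename id) (h.rename id) = _
      rw [Tm.rename_id, Hd.rename_id]
  | .resume n₁ n₂ => by
      show Tm.resume (n₁.rename id) (n₂.rename id) = _
      rw [NF.rename_id, NF.rename_id]
  | .check n => by show Tm.check (n.rename id) = _; rw [NF.rename_id]
  | .checkM n => by show Tm.checkM (n.rename id) = _; rw [NF.rename_id]
  | .mkvar _ => rfl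
  | .dlet n t => by
      show Tm.dlet (n.rename id) (t.rename id) = _
      rw [NF.rename_id, Tm.rename_id]
  | .tls t => by show Tm.tls (t.rename id) = _; rw [Tm.rename_id]
  | .err => rfl
theorem Hd.rename_id : ∀ h : Hd, h.rename id = h
  | .retH t => by
      show Hd.retH (t.rename (liftR id)) = _
      rw [liftR_id, Tm.rename_id]
  | .opH h o t => by
      show Hd.opH (h.rename id) o (t.rename (liftR (liftR id))) = _
      rw [liftR_id, liftR_id, Hd.rename_id, Tm.rename_id]
end

/-- Weakening helpers. -/
theorem Good.append (Γ Γ₂ : MCtx) : Good id Γ (Γ ++ Γ₂) := by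
  intro i T hi
  have hlt : i < Γ.length := by
    by_contra hge
    simp [List.getElem?_eq_none (by omega : Γ.length ≤ i)] at hi
  simpa [List.getElem?_append_left hlt] using hi

theorem J.weakenV {Sg Γ n T} (h : J Sg (.v Γ n T)) (Γ₂ : MCtx) :
    J Sg (.v (Γ ++ Γ₂) n T) := by
  have := J.renameJ h (Γ ++ Γ₂) id (Good.append Γ Γ₂)
  simpa [Jdg.ren, NF.rename_id] using this

theorem J.renameT {Sg Γ Γ' tm T Δ} (h : J Sg (.t Γ tm T Δ)) (f : ℕ → ℕ)
    (hg : Good f Γ Γ') : J Sg (.t Γ' (tm.rename f) T Δ) :=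
  J.renameJ h Γ' f hg

theorem J.renameV {Sg Γ Γ' n T} (h : J Sg (.v Γ n T)) (f : ℕ → ℕ)
    (hg : Good f Γ Γ') : J Sg (.v Γ' (n.rename f) T) :=
  J.renameJ h Γ' f hg

theorem J.renameH {Sg Γ Γ' hh S Δ₁ T Δ₂} (h : J Sg (.h Γ hh S Δ₁ T Δ₂)) (f : ℕ → ℕ)
    (hg : Good f Γ Γ') : J Sg (.h Γ' (hh.rename f) S Δ₁ T Δ₂) :=
  J.renameJ h Γ' f hg

theorem J.weakenT {Sg Γ tm T Δ} (h : J Sg (.t Γ tm T Δ)) (Γ₂ : MCtx) :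
    J Sg (.t (Γ ++ Γ₂) tm T Δ) := by
  have := J.renameJ h (Γ ++ Γ₂) id (Good.append Γ Γ₂)
  simpa [Jdg.ren, Tm.rename_id] using this

theorem J.weakenH {Sg Γ hh S Δ₁ T Δ₂} (h : J Sg (.h Γ hh S Δ₁ T Δ₂)) (Γ₂ : MCtx) :
    J Sg (.h (Γ ++ Γ₂) hh S Δ₁ T Δ₂) := by
  have := J.renameJ h (Γ ++ Γ₂) id (Good.append Γ Γ₂)
  simpa [Jdg.ren, Hd.rename_id] using this

/-! Substitution. -/

def GoodS (Sg : Sig) (σ : ℕ → NF) (Γ Γ' : MCtx) : Prop :=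
  ∀ i T, Γ[i]? = some T → J Sg (.v Γ' (σ i) T)

theorem GoodS.lift {Sg σ Γ Γ'} (h : GoodS Sg σ Γ Γ') (S : MTy) :
    GoodS Sg (liftS σ) (S :: Γ) (S :: Γ') := by
  intro i T hi
  cases i with
  | zero =>
      simp only [liftS]
      simp only [List.getElem?_cons_zero, Option.some.injEq] at hi
      subst hi; exact .vvar (by simp)
  | succ i =>
      simp only [liftS]
      have := h i T (by simpa using hi)
      exact J.renameV this Nat.succ (by intro j T' hj; simpa using hj)

def Jdg.sub : Jdg → MCtx → (ℕ → NF) → Jdg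
  | .v _ n T, Γ', σ => .v Γ' (n.subst σ) T
  | .t _ tm T Δ, Γ', σ => .t Γ' (tm.subst σ) T Δ
  | .h _ hh S Δ₁ T Δ₂, Γ', σ => .h Γ' (hh.subst σ) S Δ₁ T Δ₂

theorem Hd.dom_subst : ∀ (h : Hd) (σ), (Hd.subst h σ).dom = h.dom
  | .retH _, _ => rfl
  | .opH h o t, σ => by
      show Hd.dom (.opH (h.subst σ) o (t.subst (liftS (liftS σ)))) = _
      simp [Hd.dom, Hd.dom_subst h σ]

theorem J.substJ {Sg j} (hj : J Sg j) :
    ∀ Γ' σ, GoodS Sg σ j.ctx Γ' → J Sg (j.sub Γ' σ) := by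
  induction hj with
  | vvar h => intro Γ' σ hg; exact hg _ _ h
  | vnat => intro Γ' σ hg; exact .vnat
  | vlam _ ih => intro Γ' σ hg; exact .vlam (ih _ _ (hg.lift _))
  | vkont _ ih => intro Γ' σ hg; exact .vkont (ih _ _ (hg.lift _))
  | vfp => intro Γ' σ hg; exact .vfp
  | vastNat => intro Γ' σ hg; exact .vastNat
  | vastVar _ ih => intro Γ' σ hg; exact .vastVar (ih _ _ hg)
  | vastLam _ _ ih₁ ih₂ => intro Γ' σ hg; exact .vastLam (ih₁ _ _ hg) (ih₂ _ _ hg)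
  | vastApp _ _ ih₁ ih₂ => intro Γ' σ hg; exact .vastApp (ih₁ _ _ hg) (ih₂ _ _ hg)
  | vastCont _ _ ih₁ ih₂ => intro Γ' σ hg; exact .vastCont (ih₁ _ _ hg) (ih₂ _ _ hg)
  | vastRet _ ih => intro Γ' σ hg; exact .vastRet (ih _ _ hg)
  | vastDo _ _ _ ih₁ ih₂ ih₃ =>
      intro Γ' σ hg; exact .vastDo (ih₁ _ _ hg) (ih₂ _ _ hg) (ih₃ _ _ hg)
  | vastOp _ ih => intro Γ' σ hg; exact .vastOp (ih _ _ hg)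
  | vastHwith _ _ ih₁ ih₂ => intro Γ' σ hg; exact .vastHwith (ih₁ _ _ hg) (ih₂ _ _ hg)
  | vastHret _ _ ih₁ ih₂ => intro Γ' σ hg; exact .vastHret (ih₁ _ _ hg) (ih₂ _ _ hg)
  | vastHop _ _ _ _ ih₁ ih₂ ih₃ ih₄ =>
      intro Γ' σ hg; exact .vastHop (ih₁ _ _ hg) (ih₂ _ _ hg) (ih₃ _ _ hg) (ih₄ _ _ hg)
  | tapp _ _ ih₁ ih₂ => intro Γ' σ hg; exact .tapp (ih₁ _ _ hg) (ih₂ _ _ hg)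
  | tresume _ _ ih₁ ih₂ => intro Γ' σ hg; exact .tresume (ih₁ _ _ hg) (ih₂ _ _ hg)
  | tret _ ih => intro Γ' σ hg; exact .tret (ih _ _ hg)
  | tseq _ _ ih₁ ih₂ => intro Γ' σ hg; exact .tseq (ih₁ _ _ hg) (ih₂ _ _ (hg.lift _))
  | top _ ho ih => intro Γ' σ hg; exact .top (ih _ _ hg) ho
  | thandle _ _ hdom ih₁ ih₂ =>
      intro Γ' σ hg
      exact .thandle (ih₁ _ _ hg) (ih₂ _ _ hg) (by simpa [Hd.dom_subst] using hdom)
  | tcheck _ ih => intro Γ' σ hg; exact .tcheck (ih _ _ hg)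
  | tcheckM _ ih => intro Γ' σ hg; exact .tcheckM (ih _ _ hg)
  | tmkvar => intro Γ' σ hg; exact .tmkvar
  | tdlet _ _ ih₁ ih₂ => intro Γ' σ hg; exact .tdlet (ih₁ _ _ hg) (ih₂ _ _ hg)
  | ttls _ ih => intro Γ' σ hg; exact .ttls (ih _ _ hg)
  | terr => intro Γ' σ hg; exact .terr
  | hret _ ih => intro Γ' σ hg; exact .hret (ih _ _ (hg.lift _))
  | hop _ _ ih₁ ih₂ =>
      intro Γ' σ hg; exact .hop (ih₁ _ _ hg) (ih₂ _ _ ((hg.lift _).lift _))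

theorem J.subst1 {Sg Γ S tm T Δ n} (ht : J Sg (.t (S :: Γ) tm T Δ))
    (hn : J Sg (.v Γ n S)) : J Sg (.t Γ (tm.subst1 n) T Δ) := by
  have := J.substJ ht Γ (fun i => match i with | 0 => n | i + 1 => .var i) ?_
  · exact this
  · intro i T' hi
    dsimp only [Jdg.ctx] at hi
    match i with
    | 0 => simp only [List.getElem?_cons_zero, Option.some.injEq] at hi; subst hi; exact hn
    | i + 1 => exact .vvar (by simpa using hi)

theorem J.subst2 {Sg Γ K X tm T Δ nk nx} (ht : J Sg (.t (K :: X :: Γ) tm T Δ))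
    (hk : J Sg (.v Γ nk K)) (hx : J Sg (.v Γ nx X)) :
    J Sg (.t Γ (tm.subst2 nk nx) T Δ) := by
  have := J.substJ ht Γ (fun i => match i with | 0 => nk | 1 => nx | i + 2 => .var i) ?_
  · exact this
  · intro i T' hi
    dsimp only [Jdg.ctx] at hi
    match i with
    | 0 => simp only [List.getElem?_cons_zero, Option.some.injEq] at hi; subst hi; exact hk
    | 1 => simp only [List.getElem?_cons_succ, List.getElem?_cons_zero,
             Option.some.injEq] at hi; subst hi; exact hx
    | i + 2 => exact .vvar (by simpa using hi)

/-! Canonical forms (in the empty context). -/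

theorem canonical_fn {Sg n S Δ T} (h : J Sg (.v [] n (.fn S Δ T))) :
    ∃ t, n = .lam t ∧ J Sg (.t [S] t T Δ) := by
  cases h with
  | vvar h => simp at h
  | vlam h => exact ⟨_, rfl, h⟩

theorem canonical_cont {Sg n S Δ T} (h : J Sg (.v [] n (.cont S Δ T))) :
    ∃ t, n = .kont t ∧ J Sg (.t [S] t T Δ) := by
  cases h with
  | vvar h => simp at h
  | vkont h => exact ⟨_, rfl, h⟩

theorem canonical_fparam {Sg n} (h : J Sg (.v [] n .fparam)) :
    ∃ a R, n = .fp a R := by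
  cases h with
  | vvar h => simp at h
  | vfp => exact ⟨_, _, rfl⟩

/-! Handler lemmas. -/

theorem dom_lookup : ∀ (h : Hd) (o : OpName), o ∈ h.dom ↔ ∃ t, h.lookup o = some t
  | .retH t, o => by simp [Hd.dom, Hd.lookup]
  | .opH h o' t, o => by
      by_cases ho : o' = o
      · subst ho; simp [Hd.dom, Hd.lookup]
      · simp [Hd.dom, Hd.lookup, ho, Ne.symm ho, dom_lookup h o]

theorem retClause_ty {Sg Γ S Δ₁ T Δ₂} :
    ∀ (h : Hd), J Sg (.h Γ h S Δ₁ T Δ₂) → J Sg (.t (S :: Γ) h.retClause T Δ₂)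
  | .retH t, hj => by cases hj with | hret h => exact h
  | .opH h o t, hj => by
      cases hj with
      | hop hh ht => exact retClause_ty (h := h) hh

theorem lookup_ty {Sg Γ S Δ₁ T Δ₂ o t} :
    ∀ (h : Hd), J Sg (.h Γ h S Δ₁ T Δ₂) → h.lookup o = some t →
      J Sg (.t (MTy.cont (mty (Sg.res1 o)) Δ₂ T :: mty (Sg.arg1 o) :: Γ) t T Δ₂)
  | .retH _, _, hl => by simp [Hd.lookup] at hl
  | .opH h o' t', hj, hl => by
      cases hj with
      | hop hh ht =>
          by_cases ho : o' = o
          · subst ho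
            simp [Hd.lookup] at hl
            subst hl; exact ht
          · simp [Hd.lookup, ho] at hl
            exact lookup_ty (o := o) (t := t) h hh hl

/-! Evaluation-context typing. -/

inductive ECtxT (Sg : Sig) (Γ : MCtx) : CCtx → MTy → Eff → MTy → Eff → Prop
  | nil {T Δ} : ECtxT Sg Γ [] T Δ T Δ
  | seqF {E S T Δ T' Δ' t₂} :
      J Sg (.t (S :: Γ) t₂ T Δ) → ECtxT Sg Γ E T Δ T' Δ' →
      ECtxT Sg Γ (.seqF t₂ :: E) S Δ T' Δ'
  | handleF {E S Δ₁ T Δ₂ T' Δ' h} :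
      J Sg (.h Γ h S Δ₁ T Δ₂) →
      (∀ o ∈ Δ₁, o ∉ Δ₂ → o ∈ h.dom) →
      ECtxT Sg Γ E T Δ₂ T' Δ' →
      ECtxT Sg Γ (.handleF h :: E) S Δ₁ T' Δ'
  | dletF {E T Δ T' Δ' a R} :
      ECtxT Sg Γ E T Δ T' Δ' → ECtxT Sg Γ (.dletF a R :: E) T Δ T' Δ'
  | tlsF {E T Δ T' Δ'} :
      ECtxT Sg Γ E T Δ T' Δ' → ECtxT Sg Γ (.tlsF :: E) T Δ T' Δ'

theorem ECtxT.plug {Sg Γ E T Δ T' Δ'} (hE : ECtxT Sg Γ E T Δ T' Δ') :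
    ∀ {t}, J Sg (.t Γ t T Δ) → J Sg (.t Γ (plugC E t) T' Δ') := by
  induction hE with
  | nil => intro t ht; exact ht
  | seqF h2 _ ih => intro t ht; exact ih (.tseq ht h2)
  | handleF hh hdom _ ih => intro t ht; exact ih (.thandle ht hh hdom)
  | dletF _ ih => intro t ht; exact ih (.tdlet .vfp ht)
  | tlsF _ ih => intro t ht; exact ih (.ttls ht)

theorem ECtxT.handled {Sg Γ E T Δ T' Δ'} (hE : ECtxT Sg Γ E T Δ T' Δ') :
    Δ ⊆ handledC E ∪ Δ' := by
  induction hE with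
  | nil => simp [handledC]
  | seqF _ _ ih => intro o ho; simpa [handledC] using ih ho
  | handleF hh hdom hE ih =>
      rename_i S Δ₁ T Δ₂ T' Δ' h
      intro o ho
      simp only [handledC, Set.mem_union]
      by_cases h2 : o ∈ Δ₂
      · have := ih h2
        simp only [Set.mem_union] at this
        tauto
      · exact Or.inl (Or.inr (hdom o ho h2))
  | dletF _ ih => intro o ho; simpa [handledC] using ih ho
  | tlsF _ ih => intro o ho; simpa [handledC] using ih ho

theorem ECtxT.split {Sg Γ} :
    ∀ (E₂ : CCtx) {E₁ A Δa B Δb}, ECtxT Sg Γ (E₂ ++ E₁) A Δa B Δb →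
      ∃ C Δc, ECtxT Sg Γ E₂ A Δa C Δc ∧ ECtxT Sg Γ E₁ C Δc B Δb := by
  intro E₂
  induction E₂ with
  | nil => intro E₁ A Δa B Δb h; exact ⟨A, Δa, .nil, by simpa using h⟩
  | cons F E₂ ih =>
      intro E₁ A Δa B Δb h
      cases h with
      | seqF h2 hE =>
          obtain ⟨C, Δc, h3, h4⟩ := ih hE
          exact ⟨C, Δc, .seqF h2 h3, h4⟩
      | handleF hh hdom hE =>
          obtain ⟨C, Δc, h3, h4⟩ := ih hE
          exact ⟨C, Δc, .handleF hh hdom h3, h4⟩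
      | dletF hE =>
          obtain ⟨C, Δc, h3, h4⟩ := ih hE
          exact ⟨C, Δc, .dletF h3, h4⟩
      | tlsF hE =>
          obtain ⟨C, Δc, h3, h4⟩ := ih hE
          exact ⟨C, Δc, .tlsF h3, h4⟩

theorem ECtxT.weaken {Sg Γ E T Δ T' Δ'} (h : ECtxT Sg Γ E T Δ T' Δ') (Γ₂ : MCtx) :
    ECtxT Sg (Γ ++ Γ₂) E T Δ T' Δ' := by
  induction h with
  | nil => exact .nil
  | seqF h2 _ ih => exact .seqF (J.weakenT h2 Γ₂) ih
  | handleF hh hdom _ ih => exact .handleF (J.weakenH hh Γ₂) hdom ih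
  | dletF _ ih => exact .dletF ih
  | tlsF _ ih => exact .tlsF ih

/-- Find the innermost handler for `o`. -/
theorem find_handler {o : OpName} :
    ∀ (E : CCtx), o ∈ handledC E →
      ∃ E₂ h E₁, E = E₂ ++ .handleF h :: E₁ ∧ o ∈ h.dom ∧ o ∉ handledC E₂ := by
  intro E
  induction E with
  | nil => intro h; simp [handledC] at h
  | cons F E ih =>
      intro hmem
      match F with
      | .handleF h =>
          by_cases hd : o ∈ h.dom
          · exact ⟨[], h, E, rfl, hd, by simp [handledC]⟩
          · have : o ∈ handledC E := by
              rcases (Set.mem_union _ _ _).1 (by simpa [handledC] using hmem) with h1 | h1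
              · exact h1
              · exact absurd h1 hd
            obtain ⟨E₂, h', E₁, heq, hd', hn⟩ := ih this
            exact ⟨.handleF h :: E₂, h', E₁, by simp [heq], hd',
              by simp [handledC, Set.mem_union]; tauto⟩
      | .seqF t₂ =>
          obtain ⟨E₂, h', E₁, heq, hd', hn⟩ := ih (by simpa [handledC] using hmem)
          exact ⟨.seqF t₂ :: E₂, h', E₁, by simp [heq], hd', by simpa [handledC] using hn⟩
      | .dletF a R =>
          obtain ⟨E₂, h', E₁, heq, hd', hn⟩ := ih (by simpa [handledC] using hmem)
          exact ⟨.dletF a R :: E₂, h', E₁, by simp [heq], hd', by simpa [handledC] using hn⟩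
      | .tlsF =>
          obtain ⟨E₂, h', E₁, heq, hd', hn⟩ := ih (by simpa [handledC] using hmem)
          exact ⟨.tlsF :: E₂, h', E₁, by simp [heq], hd', by simpa [handledC] using hn⟩

/-! Configuration typing. -/

def CfgOK (Sg : Sig) (k : Cfg) : Prop :=
  ∃ T Δ T', ECtxT Sg [] k.ctx T Δ T' ∅ ∧ J Sg (.t [] k.tm T Δ)

theorem preservation {Sg k k'} (hs : CStep k k') (hok : CfgOK Sg k) : CfgOK Sg k' := by
  obtain ⟨T, Δ, T', hE, ht⟩ := hok
  cases hs with
  | app =>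
      cases ht with
      | tapp h1 h2 =>
          cases h1 with
          | vlam hb => exact ⟨T, Δ, T', hE, J.subst1 hb h2⟩
  | seq =>
      cases ht with
      | tseq h1 h2 =>
          cases h1 with
          | tret hn => exact ⟨T, Δ, T', hE, J.subst1 h2 hn⟩
  | hdl =>
      cases ht with
      | thandle h1 hh hdom =>
          cases h1 with
          | tret hn => exact ⟨T, Δ, T', hE, J.subst1 (retClause_ty _ hh) hn⟩
  | pushSeq =>
      cases ht with
      | tseq h1 h2 => exact ⟨_, _, T', .seqF h2 hE, h1⟩
  | pushHandle =>
      cases ht with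
      | thandle h1 hh hdom => exact ⟨_, _, T', .handleF hh hdom hE, h1⟩
  | pushDlet =>
      cases ht with
      | tdlet hn htm => exact ⟨T, Δ, T', .dletF hE, htm⟩
  | pushTls =>
      cases ht with
      | ttls htm => exact ⟨T, Δ, T', .tlsF hE, htm⟩
  | popSeq =>
      cases hE with
      | seqF h2 hE' => exact ⟨_, _, T', hE', .tseq ht h2⟩
  | popHandle =>
      cases hE with
      | handleF hh hdom hE' => exact ⟨_, _, T', hE', .thandle ht hh hdom⟩
  | gen =>
      cases ht with
      | tmkvar => exact ⟨_, Δ, T', hE, .tret .vfp⟩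
  | chs _ =>
      cases ht with
      | tcheck hn => exact ⟨T, Δ, T', hE, .tret hn⟩
  | chf _ => exact ⟨T, Δ, T', hE, .terr⟩
  | cms _ =>
      cases ht with
      | tcheckM hn => exact ⟨T, Δ, T', hE, .tret hn⟩
  | cmf _ => exact ⟨T, Δ, T', hE, .terr⟩
  | tls =>
      cases hE with
      | tlsF hE' => exact ⟨T, Δ, T', hE', ht⟩
  | dlt =>
      cases hE with
      | dletF hE' => exact ⟨T, Δ, T', hE', ht⟩
  | op E₁ E₂ hl hno =>
      rename_i h o n tcl U M I
      cases ht with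
      | top hn ho =>
          obtain ⟨C, Δc, hE₂, hrest⟩ := ECtxT.split E₂ hE
          cases hrest with
          | @handleF _ _ _ T₂ Δ₂ _ _ _ hh hdom hE₁ =>
              refine ⟨T₂, Δ₂, T', hE₁, ?_⟩
              have hclause := lookup_ty (o := o) (t := tcl) h hh hl
              have hkbody :
                  J Sg (.t [mty (Sg.res1 o)] (.handle (plugC E₂ (.ret (.var 0))) h) T₂ Δ₂) := by
                refine .thandle ?_ (J.weakenH hh _) hdom
                exact (hE₂.weaken _).plug (.tret (.vvar (by simp)))
              exact J.subst2 hclause (.vkont hkbody) hn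
  | resume =>
      cases ht with
      | tresume h1 h2 =>
          cases h1 with
          | vkont hb => exact ⟨T, Δ, T', hE, J.subst1 hb h2⟩

theorem progress {Sg k} (hok : CfgOK Sg k) :
    k.tm = .err ∨ (∃ n, k.tm = .ret n ∧ k.ctx = []) ∨ ∃ k', CStep k k' := by
  obtain ⟨T, Δ, T', hE, ht⟩ := hok
  obtain ⟨t, E, U, M, I⟩ := k
  dsimp only at *
  match t with
  | .app n₁ n₂ =>
      cases ht with
      | tapp h1 h2 =>
          obtain ⟨t, rfl, _⟩ := canonical_fn h1
          exact Or.inr (Or.inr ⟨_, .app⟩)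
  | .ret n =>
      cases E with
      | nil => exact Or.inr (Or.inl ⟨n, rfl, rfl⟩)
      | cons F E =>
          refine Or.inr (Or.inr ?_)
          match F with
          | .seqF t₂ => exact ⟨_, .popSeq⟩
          | .handleF h => exact ⟨_, .popHandle⟩
          | .dletF a R => exact ⟨_, .dlt⟩
          | .tlsF => exact ⟨_, .tls⟩
  | .seq t₁ t₂ => exact Or.inr (Or.inr ⟨_, .pushSeq⟩)
  | .op o n =>
      cases ht with
      | top hn ho =>
          have hh : o ∈ handledC E := by
            have := hE.handled ho
            simpa using this
          obtain ⟨E₂, h, E₁, rfl, hd, hno⟩ := find_handler E hh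
          obtain ⟨tcl, hl⟩ := (dom_lookup h o).1 hd
          exact Or.inr (Or.inr ⟨_, .op E₁ E₂ hl hno⟩)
  | .handle t h => exact Or.inr (Or.inr ⟨_, .pushHandle⟩)
  | .resume n₁ n₂ =>
      cases ht with
      | tresume h1 h2 =>
          obtain ⟨t, rfl, _⟩ := canonical_cont h1
          exact Or.inr (Or.inr ⟨_, .resume⟩)
  | .check n =>
      by_cases hc : n.fvs ⊆ piFVs E
      · exact Or.inr (Or.inr ⟨_, .chs hc⟩)
      · exact Or.inr (Or.inr ⟨_, .chf hc⟩)
  | .checkM n =>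
      by_cases hc : n.fvs \ M ⊆ piFVs E
      · exact Or.inr (Or.inr ⟨_, .cms hc⟩)
      · exact Or.inr (Or.inr ⟨_, .cmf hc⟩)
  | .mkvar R => exact Or.inr (Or.inr ⟨_, .gen⟩)
  | .dlet n t =>
      cases ht with
      | tdlet hn htm =>
          obtain ⟨a, R, rfl⟩ := canonical_fparam hn
          exact Or.inr (Or.inr ⟨_, .pushDlet⟩)
  | .tls t => exact Or.inr (Or.inr ⟨_, .pushTls⟩)
  | .err => exact Or.inl rfl

theorem preservation_steps {Sg k k'} (hs : CSteps k k') (hok : CfgOK Sg k) : CfgOK Sg k' := by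
  induction hs with
  | refl => exact hok
  | tail _ h ih => exact preservation h ih

/-! Elaboration preserves (simplified) typing. -/

theorem wk1T {Sg Γ tm T Δ} (X : MTy) (h : J Sg (.t Γ tm T Δ)) :
    J Sg (.t (X :: Γ) (tm.rename Nat.succ) T Δ) :=
  J.renameT h Nat.succ (by intro i T' hi; simpa using hi)

theorem wk1T' {Sg Γ A tm T Δ} (X : MTy) (h : J Sg (.t (A :: Γ) tm T Δ)) :
    J Sg (.t (A :: X :: Γ) (tm.rename (liftR Nat.succ)) T Δ) :=
  J.renameT h _ (Good.lift (by intro i T' hi; simpa using hi) A)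

theorem wk2T' {Sg Γ B A tm T Δ} (X : MTy) (h : J Sg (.t (B :: A :: Γ) tm T Δ)) :
    J Sg (.t (B :: A :: X :: Γ) (tm.rename (liftR (liftR Nat.succ))) T Δ) :=
  J.renameT h _ (Good.lift (Good.lift (by intro i T' hi; simpa using hi) A) B)

theorem mctx_get {Γ : SCtx} {i : ℕ} {s : SEntry} (h : Γ[i]? = some s) :
    (mctx Γ)[i]? = some (mentry s) := by
  simp [mctx, h]

theorem elabHs_dom (fl : Flavor) : ∀ h : SHandler, (elabHs fl h).dom = h.dom
  | .retH _ _ => rfl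
  | .opH h o _ _ e => by
      show Hd.dom (.opH (elabHs fl h) o (elabEs fl e)) = _
      simp [Hd.dom, SHandler.dom, elabHs_dom fl h]

theorem wrapC_naive (b : Bool) (n : NF) : wrapC b .naive n = .ret n := by
  cases b <;> rfl

theorem dletWrap_naive (b : Bool) (xs : List ℕ) (t : Tm) :
    dletWrap b .naive xs t = t := by
  cases b <;> rfl

mutual
theorem elabV_J {Sg Γ v T Δ} (h : QVal Sg Γ v T Δ) (b : Bool) :
    J Sg (.t (mctx Γ) (elabV .naive b v) .ast Δ) := by
  match h with
  | .var hi =>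
      rw [show elabV .naive b (.var _) = wrapC b .naive (.astVar (.var _)) from rfl,
        wrapC_naive]
      exact .tret (.vastVar (.vvar (mctx_get hi)))
  | .nat =>
      rw [show elabV .naive b (.nat _) = wrapC b .naive (.astNat _) from rfl, wrapC_naive]
      exact .tret .vastNat
  | .lam he =>
      rw [show elabV .naive b (.lam _ _) =
        .seq (.mkvar _) (dletWrap b .naive [0]
          (.seq (elabE .naive b _) (.ret (.astLam (.var 1) (.var 0))))) from rfl,
        dletWrap_naive]
      exact .tseq .tmkvar (.tseq (elabE_J he b)
        (.tret (.vastLam (.vvar (T := MTy.fparam) (by simp)) (.vvar (T := MTy.ast) (by simp)))))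

theorem elabE_J {Sg Γ e T Δ ξ} (h : QExpr Sg Γ e T Δ ξ) (b : Bool) :
    J Sg (.t (mctx Γ) (elabE .naive b e) .ast Δ) := by
  match h with
  | .app h₁ h₂ =>
      rw [show elabE .naive b (.app _ _) =
        .seq (elabV .naive b _)
          (.seq ((elabV .naive b _).rename Nat.succ)
            (wrapC b .naive (.astApp (.var 1) (.var 0)))) from rfl, wrapC_naive]
      exact .tseq (elabV_J h₁ b) (.tseq (wk1T _ (elabV_J h₂ b))
        (.tret (.vastApp (.vvar (T := MTy.ast) (by simp)) (.vvar (T := MTy.ast) (by simp)))))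
  | .resume h₁ h₂ =>
      rw [show elabE .naive b (.resume _ _) =
        .seq (elabV .naive b _)
          (.seq ((elabV .naive b _).rename Nat.succ)
            (wrapC b .naive (.astCont (.var 1) (.var 0)))) from rfl, wrapC_naive]
      exact .tseq (elabV_J h₁ b) (.tseq (wk1T _ (elabV_J h₂ b))
        (.tret (.vastCont (.vvar (T := MTy.ast) (by simp)) (.vvar (T := MTy.ast) (by simp)))))
  | .ret hv =>
      rw [show elabE .naive b (SExpr.ret _) =
        .seq (elabV .naive b _) (wrapC b .naive (.astRet (.var 0))) from rfl, wrapC_naive]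
      exact .tseq (elabV_J hv b) (.tret (.vastRet (.vvar (T := MTy.ast) (by simp))))
  | .seq h₁ h₂ =>
      rw [show elabE .naive b (.seq _ _ _) =
        .seq (elabE .naive b _)
          (.seq (.mkvar _)
            (dletWrap b .naive [0]
              (.seq ((elabE .naive b _).rename (liftR Nat.succ))
                (.ret (.astDo (.var 2) (.var 1) (.var 0)))))) from rfl, dletWrap_naive]
      exact .tseq (elabE_J h₁ b) (.tseq .tmkvar (.tseq (wk1T' _ (elabE_J h₂ b))
        (.tret (.vastDo (.vvar (T := MTy.ast) (by simp)) (.vvar (T := MTy.fparam) (by simp)) (.vvar (T := MTy.ast) (by simp))))))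
  | .op hv ho =>
      rw [show elabE .naive b (SExpr.op _ _) =
        .seq (elabV .naive b _) (wrapC b .naive (.astOp _ (.var 0))) from rfl, wrapC_naive]
      exact .tseq (elabV_J hv b) (.tret (.vastOp (.vvar (T := MTy.ast) (by simp))))
  | .handle he hh hdom =>
      rw [show elabE .naive b (SExpr.handle _ _) =
        .seq (elabE .naive b _)
          (.seq ((elabH .naive b _).rename Nat.succ)
            (wrapC b .naive (.astHwith (.var 1) (.var 0)))) from rfl, wrapC_naive]
      exact .tseq (elabE_J he b) (.tseq (wk1T _ (elabH_J hh b))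
        (.tret (.vastHwith (.vvar (T := MTy.ast) (by simp)) (.vvar (T := MTy.ast) (by simp)))))
  | .splice hs =>
      cases b with
      | true =>
          rw [show elabE .naive true (.splice _) = topWrap .naive (.tls (elabEs .naive _))
            from rfl]
          exact .ttls (elabEs_J hs)
      | false =>
          rw [show elabE .naive false (.splice _) = elabEs .naive _ from rfl]
          exact elabEs_J hs

theorem elabH_J {Sg Γ hd S ξ₁ T ξ₂ Δ} (h : QHdl Sg Γ hd S ξ₁ T ξ₂ Δ) (b : Bool) :
    J Sg (.t (mctx Γ) (elabH .naive b hd) .ast Δ) := by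
  match h with
  | .retH he =>
      rw [show elabH .naive b (.retH _ _) =
        .seq (.mkvar _) (dletWrap b .naive [0]
          (.seq (elabE .naive b _) (.ret (.astHret (.var 1) (.var 0))))) from rfl,
        dletWrap_naive]
      exact .tseq .tmkvar (.tseq (elabE_J he b)
        (.tret (.vastHret (.vvar (T := MTy.fparam) (by simp)) (.vvar (T := MTy.ast) (by simp)))))
  | .opH hh he hsub =>
      rw [show elabH .naive b (.opH _ _ _ _ _) =
        .seq (elabH .naive b _)
          (.seq (.mkvar _)
            (.seq ((.mkvar _ : Tm).rename Nat.succ)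
              (dletWrap b .naive [1, 0]
                (.seq ((elabE .naive b _).rename (liftR (liftR Nat.succ)))
                  (.ret (.astHop (.var 3) _ (.var 2) (.var 1) (.var 0))))))) from rfl,
        dletWrap_naive]
      exact .tseq (elabH_J hh b) (.tseq .tmkvar (.tseq .tmkvar
        (.tseq (wk2T' _ (elabE_J he b))
          (.tret (.vastHop (.vvar (T := MTy.ast) (by simp)) (.vvar (T := MTy.fparam) (by simp)) (.vvar (T := MTy.fparam) (by simp)) (.vvar (T := MTy.ast) (by simp)))))))

theorem elabVs_J {Sg Γ v T} (h : SValT Sg Γ v T) :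
    J Sg (.v (mctx Γ) (elabVs .naive v) (mty T)) := by
  match h with
  | .var hi => exact .vvar (mctx_get hi)
  | .nat => exact .vnat
  | .lam he => exact .vlam (elabEs_J he)

theorem elabEs_J {Sg Γ e T Δ} (h : SExprT Sg Γ e T Δ) :
    J Sg (.t (mctx Γ) (elabEs .naive e) (mty T) Δ) := by
  match h with
  | .app h₁ h₂ => exact .tapp (elabVs_J h₁) (elabVs_J h₂)
  | .resume h₁ h₂ => exact .tresume (elabVs_J h₁) (elabVs_J h₂)
  | .ret hv => exact .tret (elabVs_J hv)
  | .seq h₁ h₂ => exact .tseq (elabEs_J h₁) (elabEs_J h₂)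
  | .op hv ho => exact .top (elabVs_J hv) ho
  | .handle he hh hdom =>
      exact .thandle (elabEs_J he) (elabHs_J hh)
        (by simpa [elabHs_dom] using hdom)
  | .quote hq => exact elabE_J hq false

theorem elabHs_J {Sg Γ hd S Δ₁ T Δ₂} (h : SHdlT Sg Γ hd S Δ₁ T Δ₂) :
    J Sg (.h (mctx Γ) (elabHs .naive hd) (mty S) Δ₁ (mty T) Δ₂) := by
  match h with
  | .retH he => exact .hret (elabEs_J he)
  | .opH hh he hsub => exact .hop (elabHs_J hh) (elabEs_J he)
end
/-- **Type Safety for elaborated programs** (Corollary 3.6): if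
`⊢_c e : T⁰ ! ∅;∅` then, starting from the initial configuration
`⟨⟦e⟧_c; [-]; ∅; ∅; ⊤⟩`, evaluation either diverges, or reaches `err`, or
reaches a configuration `⟨return n; [-]; U; M; I⟩`. -/
theorem elaborated_type_safety (Sg : Sig) (e : SExpr) (T : Ty0)
    (hty : QExpr Sg [] e T ∅ ∅) :
    CDiverges (initCfg (elabNaive e)) ∨
    (∃ (E : CCtx) (U : Finset ℕ) (M : Set FPv) (I : WithTop ℕ),
      CSteps (initCfg (elabNaive e)) ⟨.err, E, U, M, I⟩) ∨
    (∃ (n : NF) (U : Finset ℕ) (M : Set FPv) (I : WithTop ℕ),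
      CSteps (initCfg (elabNaive e)) ⟨.ret n, [], U, M, I⟩) := by
  classical
  set k0 := initCfg (elabNaive e) with hk0
  have hok0 : CfgOK Sg k0 :=
    ⟨.ast, ∅, .ast, .nil, elabE_J hty true⟩
  by_cases hdiv : ∀ k, CSteps k0 k → ∃ k', CStep k k'
  · left
    let F : {k // CSteps k0 k} → {k // CSteps k0 k} := fun p =>
      ⟨(hdiv p.1 p.2).choose, p.2.tail (hdiv p.1 p.2).choose_spec⟩
    refine ⟨fun n => (F^[n] ⟨k0, .refl⟩).1, rfl, ?_⟩
    intro n
    show CStep (F^[n] ⟨k0, .refl⟩).1 (F^[n + 1] ⟨k0, .refl⟩).1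
    rw [Function.iterate_succ_apply']
    exact (hdiv (F^[n] ⟨k0, .refl⟩).1 (F^[n] ⟨k0, .refl⟩).2).choose_spec
  · push_neg at hdiv
    obtain ⟨k, hk, hstuck⟩ := hdiv
    have hok := preservation_steps hk hok0
    rcases progress hok with herr | ⟨n, hn, hc⟩ | ⟨k', hs⟩
    · right; left
      refine ⟨k.ctx, k.used, k.muted, k.mark, ?_⟩
      have hkeq : k = ⟨.err, k.ctx, k.used, k.muted, k.mark⟩ := by
        cases k; simp_all
      exact hkeq ▸ hk
    · right; right
      refine ⟨n, k.used, k.muted, k.mark, ?_⟩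
      have hkeq : k = ⟨.ret n, [], k.used, k.muted, k.mark⟩ := by
        cases k; simp_all
      exact hkeq ▸ hk
    · exact absurd hs (hstuck k')

end MetaLang
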